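/- arXiv:1602.01187 — 5 statements merged into one kernel-verified Lean document; each statement's English description precedes it below -/
import Mathlib

section
/- Let p ≥ 1, let X be a p×p SPD matrix, and let (U,D) ∈ E_X. Then E_X = { (U·R·P⁻¹, P·D·P⁻¹) : R ∈ SO(p) with R·D = D·R, and P an even p×p signed permutation matrix }. -/
open Matrix

/-- `U` is a special orthogonal (rotation) matrix. -/
def IsSO {p : ℕ} (U : Matrix (Fin p) (Fin p) ℝ) : Prop :=
  Uᵀ * U = 1 ∧ U.det = 1

/-- `D` is diagonal with strictly positive diagonal entries. -/
def IsPosDiag {p : ℕ} (D : Matrix (Fin p) (Fin p) ℝ) : Prop :=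
  D.IsDiag ∧ ∀ i, 0 < D i i

/-- The fiber `E_X` of eigendecompositions of `X`. -/
def fiber {p : ℕ} (X : Matrix (Fin p) (Fin p) ℝ) :
    Set (Matrix (Fin p) (Fin p) ℝ × Matrix (Fin p) (Fin p) ℝ) :=
  { UD | IsSO UD.1 ∧ IsPosDiag UD.2 ∧ UD.1 * UD.2 * UD.1ᵀ = X }

/-- A signed permutation matrix: exactly one nonzero entry in each row and column,
each nonzero entry being `1` or `-1`. -/
def IsSignedPerm {p : ℕ} (M : Matrix (Fin p) (Fin p) ℝ) : Prop :=
  (∀ i, ∃! j, M i j ≠ 0) ∧ (∀ j, ∃! i, M i j ≠ 0) ∧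
    ∀ i j, M i j = 0 ∨ M i j = 1 ∨ M i j = -1

/-- An even signed permutation matrix. -/
def IsEvenSignedPerm {p : ℕ} (M : Matrix (Fin p) (Fin p) ℝ) : Prop :=
  IsSignedPerm M ∧ M.det = 1

/-- Frobenius norm of a matrix. -/
noncomputable def frob {p : ℕ} (A : Matrix (Fin p) (Fin p) ℝ) : ℝ :=
  Real.sqrt (∑ i, ∑ j, (A i j) ^ 2)

/-- `logdist Q` is the infimum of Frobenius norms of skew-symmetric logarithms of `Q`. -/
noncomputable def logdist {p : ℕ} (Q : Matrix (Fin p) (Fin p) ℝ) : ℝ :=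
  sInf { r | ∃ A : Matrix (Fin p) (Fin p) ℝ,
      Aᵀ = -A ∧ NormedSpace.exp A = Q ∧ r = frob A }

/-- Log of a positive diagonal matrix (entrywise log of the diagonal). -/
noncomputable def logDiag {p : ℕ} (D : Matrix (Fin p) (Fin p) ℝ) :
    Matrix (Fin p) (Fin p) ℝ :=
  Matrix.diagonal fun i => Real.log (D i i)

/-- The product distance on `SO(p) × Diag⁺(p)` with weight `k`. -/
noncomputable def dM {p : ℕ} (k : ℝ)
    (UD VL : Matrix (Fin p) (Fin p) ℝ × Matrix (Fin p) (Fin p) ℝ) : ℝ :=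
  Real.sqrt ((k / 2) * logdist (UD.1⁻¹ * VL.1) ^ 2 +
    frob (logDiag UD.2 - logDiag VL.2) ^ 2)

/-- The scaling–rotation distance between `X` and `Y`. -/
noncomputable def dSR {p : ℕ} (k : ℝ) (X Y : Matrix (Fin p) (Fin p) ℝ) : ℝ :=
  sInf { r | ∃ UD ∈ fiber X, ∃ VL ∈ fiber Y, r = dM k UD VL }

/-- The stabilizer `G_D` of `D` in `SO(p)`. -/
def GD {p : ℕ} (D : Matrix (Fin p) (Fin p) ℝ) : Set (Matrix (Fin p) (Fin p) ℝ) :=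
  { R | IsSO R ∧ R * D = D * R }

lemma one_mem_GD {p : ℕ} (D : Matrix (Fin p) (Fin p) ℝ) :
    (1 : Matrix (Fin p) (Fin p) ℝ) ∈ GD D :=
  ⟨⟨by simp, by simp⟩, by simp⟩

/-- The identity component `G_D⁰` of `G_D` (subspace topology). -/
noncomputable def GD0 {p : ℕ} (D : Matrix (Fin p) (Fin p) ℝ) :
    Set (Matrix (Fin p) (Fin p) ℝ) :=
  { R | ∃ h : R ∈ GD D,
      (⟨R, h⟩ : GD D) ∈ connectedComponent (⟨1, one_mem_GD D⟩ : GD D) }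

/-- The coordinate plane `ℝ^J ⊆ ℝ^p`. -/
def coordPlane {p : ℕ} (J : Finset (Fin p)) : Submodule ℝ (Fin p → ℝ) where
  carrier := { x | ∀ i ∉ J, x i = 0 }
  add_mem' := by intro a b ha hb i hi; simp [ha i hi, hb i hi]
  zero_mem' := by intro i _; rfl
  smul_mem' := by intro c a ha i hi; simp [ha i hi]

open Equiv

/-! If `V L Vᵀ = U D Uᵀ` then `L = W D Wᵀ` with `W = Vᵀ U` orthogonal, so the diagonal matrices
`L` and `D` have the same characteristic polynomial and the diagonal of `L` is that of `D`
permuted by some `σ`. For every choice of signs `ε`, `P = diag ε · P_σ` is a signed permutation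
with `P D Pᵀ = L`; choosing `ε` to compensate `sign σ` makes `P` even, and then `R = Uᵀ V P` is a
rotation with `R D Rᵀ = D`, i.e. commuting with `D`. Conversely, an even signed permutation is a
rotation that permutes the diagonal of `D`. -/

section
variable {n : Type*} [Fintype n]

lemma exists_perm_comp_eq_of_map_univ_eq {α : Type*} {f g : n → α}
    (h : Finset.univ.val.map f = Finset.univ.val.map g) : ∃ σ : Perm n, f ∘ σ = g := by
  classical
  have hcard : ∀ c, Fintype.card { i // g i = c } = Fintype.card { i // f i = c } := by
    intro c
    simpa [Fintype.card_subtype, Finset.card_def, Multiset.count_map, eq_comm] using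
      congrArg (Multiset.count c) h.symm
  exact ⟨ofFiberEquiv fun c => Fintype.equivOfCardEq (hcard c),
    funext (ofFiberEquiv_map _)⟩

variable [DecidableEq n]

open Polynomial in
lemma roots_charpoly_diagonal {R : Type*} [CommRing R] [IsDomain R] (d : n → R) :
    (diagonal d).charpoly.roots = Finset.univ.val.map d := by
  rw [charpoly_diagonal, roots_prod _ _ (by simp [Finset.prod_ne_zero_iff, X_sub_C_ne_zero])]
  simp

lemma exists_perm_comp_eq_of_diagonal_eq_conj {W : Matrix n n ℝ} {d l : n → ℝ}
    (hW : Wᵀ * W = 1) (h : diagonal l = W * diagonal d * Wᵀ) : ∃ σ : Perm n, d ∘ σ = l := by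
  have hchar : (diagonal l).charpoly = (diagonal d).charpoly := by
    rw [h, charpoly_mul_comm, ← Matrix.mul_assoc, hW, Matrix.one_mul]
  apply exists_perm_comp_eq_of_map_univ_eq
  simpa only [roots_charpoly_diagonal] using congrArg Polynomial.roots hchar.symm

lemma diagonal_mul_permMatrix_apply (ε : n → ℝ) (σ : Perm n) (i j : n) :
    (diagonal ε * σ.permMatrix ℝ) i j = if σ i = j then ε i else 0 := by
  simp [diagonal_mul, PEquiv.toMatrix_apply]

lemma diagonal_mul_permMatrix_conj_diagonal {ε : n → ℝ} (hε : ∀ i, ε i = 1 ∨ ε i = -1)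
    (σ : Perm n) (d : n → ℝ) :
    diagonal ε * σ.permMatrix ℝ * diagonal d * (diagonal ε * σ.permMatrix ℝ)ᵀ =
      diagonal (d ∘ σ) := by
  have hperm : σ.permMatrix ℝ * diagonal d * (σ.permMatrix ℝ)ᵀ = diagonal (d ∘ σ) := by
    rw [transpose_permMatrix, PEquiv.toMatrix_toPEquiv_mul, PEquiv.mul_toMatrix_toPEquiv,
      submatrix_submatrix]
    exact submatrix_diagonal_equiv d σ
  calc diagonal ε * σ.permMatrix ℝ * diagonal d * (diagonal ε * σ.permMatrix ℝ)ᵀ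
      = diagonal ε * (σ.permMatrix ℝ * diagonal d * (σ.permMatrix ℝ)ᵀ) * diagonal ε := by
        simp only [transpose_mul, diagonal_transpose, Matrix.mul_assoc]
    _ = diagonal (d ∘ σ) := by
        rw [hperm, diagonal_mul_diagonal, diagonal_mul_diagonal]
        congr 1; funext i
        rcases hε i with h | h <;> simp [h]

lemma diagonal_mul_permMatrix_mul_transpose {ε : n → ℝ} (hε : ∀ i, ε i = 1 ∨ ε i = -1)
    (σ : Perm n) : diagonal ε * σ.permMatrix ℝ * (diagonal ε * σ.permMatrix ℝ)ᵀ = 1 := by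
  simpa using diagonal_mul_permMatrix_conj_diagonal hε σ 1

lemma det_diagonal_mul_permMatrix (ε : n → ℝ) (σ : Perm n) :
    (diagonal ε * σ.permMatrix ℝ).det = (∏ i, ε i) * (Perm.sign σ : ℝ) := by
  simp [det_mul]

lemma exists_signs_prod_mul_sign_eq_one (σ : Perm n) :
    ∃ ε : n → ℝ, (∀ i, ε i = 1 ∨ ε i = -1) ∧ (∏ i, ε i) * (Perm.sign σ : ℝ) = 1 := by
  rcases Int.units_eq_one_or (Perm.sign σ) with h | h
  · exact ⟨1, fun _ => Or.inl rfl, by simp [h]⟩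
  · -- an odd permutation is not the identity, so `n` is nonempty
    obtain ⟨i⟩ : Nonempty n := by
      by_contra hn
      rw [not_nonempty_iff] at hn
      simp [Subsingleton.elim σ 1] at h
    refine ⟨fun j => if j = i then -1 else 1, fun j => by by_cases hj : j = i <;> simp [hj], ?_⟩
    simp [Finset.prod_ite_eq', h]

lemma commute_iff_mul_mul_transpose_eq {R D : Matrix n n ℝ} (hR : Rᵀ * R = 1) :
    R * D = D * R ↔ R * D * Rᵀ = D := by
  constructor
  · intro h
    rw [h, Matrix.mul_assoc, mul_eq_one_comm.mp hR, Matrix.mul_one]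
  · intro h
    calc R * D = R * D * (Rᵀ * R) := by rw [hR, Matrix.mul_one]
      _ = R * D * Rᵀ * R := by simp only [Matrix.mul_assoc]
      _ = D * R := by rw [h]

end

section Fiber
variable {p : ℕ}

lemma isSignedPerm_iff {M : Matrix (Fin p) (Fin p) ℝ} :
    IsSignedPerm M ↔ ∃ (σ : Perm (Fin p)) (ε : Fin p → ℝ),
      (∀ i, ε i = 1 ∨ ε i = -1) ∧ M = diagonal ε * σ.permMatrix ℝ := by
  constructor
  · rintro ⟨hrow, hcol, hval⟩
    choose f hf hfu using hrow
    have hinj : Function.Injective f := by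
      intro i i' h
      obtain ⟨k, -, hk⟩ := hcol (f i)
      exact (hk i (hf i)).trans (hk i' (h ▸ hf i')).symm
    refine ⟨Equiv.ofBijective f hinj.bijective_of_finite, fun i => M i (f i), fun i => ?_, ?_⟩
    · rcases hval i (f i) with h | h | h
      exacts [absurd h (hf i), Or.inl h, Or.inr h]
    · ext i j
      rw [diagonal_mul_permMatrix_apply, Equiv.ofBijective_apply]
      by_cases hj : f i = j
      · rw [if_pos hj, hj]
      · rw [if_neg hj]
        by_contra hij
        exact hj (hfu i j hij).symm
  · rintro ⟨σ, ε, hε, rfl⟩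
    have hε0 : ∀ i, ε i ≠ 0 := fun i => by rcases hε i with h | h <;> simp [h]
    refine ⟨fun i => ⟨σ i, ?_, fun j hj => ?_⟩, fun j => ⟨σ.symm j, ?_, fun i hi => ?_⟩,
      fun i j => ?_⟩
    all_goals simp only [diagonal_mul_permMatrix_apply] at *
    · simp [hε0 i]
    · by_contra h
      exact hj (if_neg (Ne.symm h))
    · simp [hε0 (σ.symm j)]
    · by_contra h
      exact hi (if_neg fun h' => h (σ.eq_symm_apply.mpr h'))
    · split_ifs
      exacts [Or.inr (hε i), Or.inl rfl]

lemma IsSO.mul_transpose_self {U : Matrix (Fin p) (Fin p) ℝ} (hU : IsSO U) : U * Uᵀ = 1 :=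
  mul_eq_one_comm.mp hU.1

lemma IsSO.inv_eq_transpose {U : Matrix (Fin p) (Fin p) ℝ} (hU : IsSO U) : U⁻¹ = Uᵀ :=
  inv_eq_left_inv hU.1

lemma IsSO.transpose {U : Matrix (Fin p) (Fin p) ℝ} (hU : IsSO U) : IsSO Uᵀ :=
  ⟨by rw [transpose_transpose, hU.mul_transpose_self], by rw [det_transpose, hU.2]⟩

lemma IsSO.mul {U V : Matrix (Fin p) (Fin p) ℝ} (hU : IsSO U) (hV : IsSO V) : IsSO (U * V) :=
  ⟨by rw [transpose_mul, Matrix.mul_assoc, ← Matrix.mul_assoc Uᵀ, hU.1, Matrix.one_mul, hV.1],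
    by rw [det_mul, hU.2, hV.2, one_mul]⟩

lemma IsEvenSignedPerm.isSO {P : Matrix (Fin p) (Fin p) ℝ} (hP : IsEvenSignedPerm P) :
    IsSO P := by
  obtain ⟨σ, ε, hε, rfl⟩ := isSignedPerm_iff.mp hP.1
  exact ⟨mul_eq_one_comm.mp (diagonal_mul_permMatrix_mul_transpose hε σ), hP.2⟩

lemma IsPosDiag.conj_isSignedPerm {D P : Matrix (Fin p) (Fin p) ℝ} (hD : IsPosDiag D)
    (hP : IsSignedPerm P) : IsPosDiag (P * D * Pᵀ) := by
  obtain ⟨σ, ε, hε, rfl⟩ := isSignedPerm_iff.mp hP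
  rw [← hD.1.diagonal_diag, diagonal_mul_permMatrix_conj_diagonal hε]
  exact ⟨isDiag_diagonal _, fun i => by simpa using hD.2 (σ i)⟩

lemma mem_fiber_of_commute_of_isEvenSignedPerm {U D R P : Matrix (Fin p) (Fin p) ℝ}
    (hU : IsSO U) (hD : IsPosDiag D) (hR : IsSO R) (hRD : R * D = D * R)
    (hP : IsEvenSignedPerm P) : (U * R * P⁻¹, P * D * P⁻¹) ∈ fiber (U * D * Uᵀ) := by
  rw [hP.isSO.inv_eq_transpose]
  refine ⟨(hU.mul hR).mul hP.isSO.transpose, hD.conj_isSignedPerm hP.1, ?_⟩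
  calc U * R * Pᵀ * (P * D * Pᵀ) * (U * R * Pᵀ)ᵀ
      = U * (R * (Pᵀ * P) * D * (Pᵀ * P) * Rᵀ) * Uᵀ := by
        simp only [transpose_mul, transpose_transpose, Matrix.mul_assoc]
    _ = U * D * Uᵀ := by
        rw [hP.isSO.1, Matrix.mul_one, Matrix.mul_one,
          (commute_iff_mul_mul_transpose_eq hR.1).mp hRD]

lemma exists_commute_isEvenSignedPerm_of_mem_fiber {U D V L : Matrix (Fin p) (Fin p) ℝ}
    (hU : IsSO U) (hD : D.IsDiag) (hVL : (V, L) ∈ fiber (U * D * Uᵀ)) :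
    ∃ R P : Matrix (Fin p) (Fin p) ℝ, IsSO R ∧ R * D = D * R ∧ IsEvenSignedPerm P ∧
      (V, L) = (U * R * P⁻¹, P * D * P⁻¹) := by
  obtain ⟨hV, hL, hX⟩ := hVL
  have hLW : diagonal L.diag = (Vᵀ * U) * diagonal D.diag * (Vᵀ * U)ᵀ := by
    rw [hL.1.diagonal_diag, hD.diagonal_diag]
    calc L = (Vᵀ * V) * L * (Vᵀ * V) := by rw [hV.1, Matrix.one_mul, Matrix.mul_one]
      _ = Vᵀ * (V * L * Vᵀ) * V := by simp only [Matrix.mul_assoc]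
      _ = (Vᵀ * U) * D * (Vᵀ * U)ᵀ := by
        rw [hX]; simp only [transpose_mul, transpose_transpose, Matrix.mul_assoc]
  obtain ⟨σ, hσ⟩ := exists_perm_comp_eq_of_diagonal_eq_conj (hV.transpose.mul hU).1 hLW
  obtain ⟨ε, hε, hsign⟩ := exists_signs_prod_mul_sign_eq_one σ
  set P := diagonal ε * σ.permMatrix ℝ
  have hP : IsEvenSignedPerm P :=
    ⟨isSignedPerm_iff.mpr ⟨σ, ε, hε, rfl⟩, (det_diagonal_mul_permMatrix ε σ).trans hsign⟩
  have hPDP : P * D * Pᵀ = L := by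
    rw [← hD.diagonal_diag, diagonal_mul_permMatrix_conj_diagonal hε, hσ, hL.1.diagonal_diag]
  have hR : IsSO (Uᵀ * V * P) := (hU.transpose.mul hV).mul hP.isSO
  refine ⟨Uᵀ * V * P, P, hR, (commute_iff_mul_mul_transpose_eq hR.1).mpr ?_, hP, ?_⟩
  · calc Uᵀ * V * P * D * (Uᵀ * V * P)ᵀ = Uᵀ * (V * (P * D * Pᵀ) * Vᵀ) * U := by
          simp only [transpose_mul, transpose_transpose, Matrix.mul_assoc]
      _ = (Uᵀ * U) * D * (Uᵀ * U) := by rw [hPDP, hX]; simp only [Matrix.mul_assoc]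
      _ = D := by rw [hU.1, Matrix.one_mul, Matrix.mul_one]
  · rw [hP.isSO.inv_eq_transpose, hPDP]
    congr 1
    calc V = (U * Uᵀ) * V * (P * Pᵀ) := by
          rw [hU.mul_transpose_self, hP.isSO.mul_transpose_self, Matrix.one_mul, Matrix.mul_one]
      _ = U * (Uᵀ * V * P) * Pᵀ := by simp only [Matrix.mul_assoc]

end Fiber

theorem stmt1_general (p : ℕ) (X : Matrix (Fin p) (Fin p) ℝ)
    (U D : Matrix (Fin p) (Fin p) ℝ) (hUD : (U, D) ∈ fiber X) :
    fiber X = { VL | ∃ R P : Matrix (Fin p) (Fin p) ℝ,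
      IsSO R ∧ R * D = D * R ∧ IsEvenSignedPerm P ∧
      VL = (U * R * P⁻¹, P * D * P⁻¹) } := by
  obtain ⟨hU, hD, rfl⟩ := hUD
  ext ⟨V, L⟩
  constructor
  · exact exists_commute_isEvenSignedPerm_of_mem_fiber hU hD.1
  · rintro ⟨R, P, hR, hRD, hP, hVL⟩
    exact hVL ▸ mem_fiber_of_commute_of_isEvenSignedPerm hU hD hR hRD hP

theorem stmt1 (p : ℕ) (hp : 1 ≤ p) (X : Matrix (Fin p) (Fin p) ℝ) (hX : X.PosDef)
    (U D : Matrix (Fin p) (Fin p) ℝ) (hUD : (U, D) ∈ fiber X) :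
    fiber X = { VL | ∃ R P : Matrix (Fin p) (Fin p) ℝ,
      IsSO R ∧ R * D = D * R ∧ IsEvenSignedPerm P ∧
      VL = (U * R * P⁻¹, P * D * P⁻¹) } :=
  stmt1_general p X U D hUD
end

section
/- Let X and Y be p×p SPD matrices. The stabilizer subgroups G_X = {U ∈ SO(p) : U·X·Uᵀ = X} and G_Y = {U ∈ SO(p) : U·Y·Uᵀ = Y} are conjugate subgroups of SO(p) (i.e., G_Y = Q·G_X·Q⁻¹ for some Q ∈ SO(p)) if and only if X and Y have the same eigenvalue-multiplicity type, i.e., the multiset of multiplicities { dim ker(X − μ·I) : μ an eigenvalue of X } equals the multiset { dim ker(Y − μ·I) : μ an eigenvalue of Y }. -/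
open Matrix

/-!
Diagonalize `X = U diag(d) Uᵀ`. A rotation commutes with `diag(d)` iff it only mixes coordinates on
which `d` takes the same value, so the stabilizer of `diag(d)` depends only on the partition of the
coordinates into level sets of `d`, and a permutation of the coordinates conjugates it accordingly.
The multiplicity type is exactly this partition up to permutation, which gives one direction; an
orthogonal conjugator of determinant `-1` is corrected by a reflection fixing `X`.

Conversely, suppose `diag(d)` and a symmetric `Z` have the same stabilizer. The quarter-turn in the
`(i, j)`-plane fixes `diag(d)` iff `d i = d j`. For `p ≥ 3` the even sign changes, which fix every
diagonal matrix, force `Z` to be diagonal, so `Z` has the same level-set partition as `d`. For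
`p ≤ 2` the stabilizer does not force `Z` to be diagonal (a non-scalar `2 × 2` matrix is fixed only
by `±1`), but it detects whether `Z` is scalar, which is all the multiplicity type records.
-/

open Finset

theorem exists_equiv_comp_eq_of_card_fiber_eq {α β γ : Type*} [Finite α] [Finite β]
    {f : α → γ} {g : β → γ} (h : ∀ c, Nat.card {a // f a = c} = Nat.card {b // g b = c}) :
    ∃ σ : α ≃ β, ∀ a, g (σ a) = f a :=
  ⟨Equiv.ofFiberEquiv fun c => (Finite.card_eq.mp (h c)).some, Equiv.ofFiberEquiv_map _⟩

section Fibers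

variable {ι κ α β : Type*} [Fintype ι] [Fintype κ] [DecidableEq α] [DecidableEq β]

theorem mul_ncard_setOf_card_fiber_eq (d : ι → α) {m : ℕ} (hm : 0 < m) :
    m * {a | #{i | d i = a} = m}.ncard = #{i | #{j | d j = d i} = m} := by
  set T := {a ∈ univ.image d | #{i | d i = a} = m}
  have hT : {a | #{i | d i = a} = m} = T := by
    ext a
    simp only [Set.mem_ofPred_eq, coe_filter, mem_image, mem_univ, true_and, T]
    refine ⟨fun ha => ⟨?_, ha⟩, And.right⟩
    obtain ⟨i, hi⟩ := card_pos.mp (ha ▸ hm)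
    exact ⟨i, (mem_filter.mp hi).2⟩
  rw [hT, Set.ncard_coe_finset, card_eq_sum_card_fiberwise (f := d) (t := T)]
  · rw [mul_comm, ← smul_eq_mul, ← sum_const]
    refine sum_congr rfl fun a ha => ?_
    have hfiber := (mem_filter.mp ha).2
    symm
    calc _ = #{i | d i = a} := by
          congr 1
          ext i
          simp only [mem_filter, mem_univ, true_and, and_iff_right_iff_imp]
          rintro rfl
          exact hfiber
      _ = m := hfiber
  · intro i hi
    simpa [T] using hi

theorem ncard_setOf_card_fiber_eq_of_forall_eq_iff {d : ι → α} {e : ι → β}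
    (hde : ∀ i j, d i = d j ↔ e i = e j) {m : ℕ} (hm : 0 < m) :
    {a | #{i | d i = a} = m}.ncard = {b | #{i | e i = b} = m}.ncard := by
  have hfiber : ∀ i, #{j | d j = d i} = #{j | e j = e i} := fun i => by
    simp_rw [hde]
  apply Nat.eq_of_mul_eq_mul_left hm
  simp_rw [mul_ncard_setOf_card_fiber_eq _ hm, hfiber]

theorem natCard_range_card_fiber_eq (d : ι → α) (m : ℕ) :
    Nat.card {a : Set.range d // #{i | d i = a} = m} =
      {a | #{i | d i = a} = m ∧ 0 < m}.ncard := by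
  rw [Nat.card_congr (Equiv.subtypeSubtypeEquivSubtypeInter (· ∈ Set.range d)
    fun a => #{i | d i = a} = m), ← Nat.card_coe_set_eq]
  congr 2
  ext a
  simp only [Set.mem_range, Set.mem_ofPred_eq]
  constructor
  · rintro ⟨⟨i, rfl⟩, rfl⟩
    exact ⟨rfl, card_pos.mpr ⟨i, by simp⟩⟩
  · rintro ⟨rfl, hm⟩
    obtain ⟨i, hi⟩ := card_pos.mp hm
    exact ⟨⟨i, (mem_filter.mp hi).2⟩, rfl⟩

theorem exists_equiv_forall_eq_iff_of_ncard_eq (d : ι → α) (e : κ → β)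
    (h : ∀ m, 0 < m → {a | #{i | d i = a} = m}.ncard = {b | #{k | e k = b} = m}.ncard) :
    ∃ σ : ι ≃ κ, ∀ i j, d i = d j ↔ e (σ i) = e (σ j) := by
  -- `φ` matches the values of `d` and `e` with level sets of equal size; `σ` then matches
  -- these level sets elementwise.
  obtain ⟨φ, hφ⟩ : ∃ φ : Set.range d ≃ Set.range e,
      ∀ a, #{k | e k = φ a} = #{i | d i = a} := by
    refine exists_equiv_comp_eq_of_card_fiber_eq (f := fun a : Set.range d => #{i | d i = a})
      (g := fun b : Set.range e => #{k | e k = b}) fun m => ?_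
    rw [natCard_range_card_fiber_eq, natCard_range_card_fiber_eq]
    rcases Nat.eq_zero_or_pos m with rfl | hm
    · simp
    · simpa [hm] using h m hm
  obtain ⟨σ, hσ⟩ : ∃ σ : ι ≃ κ,
      ∀ i, Set.rangeFactorization e (σ i) = φ (Set.rangeFactorization d i) := by
    refine exists_equiv_comp_eq_of_card_fiber_eq fun b => ?_
    classical
    simp only [← φ.eq_symm_apply, Set.rangeFactorization, Subtype.ext_iff,
      Nat.card_eq_fintype_card, Fintype.card_subtype]
    rw [← hφ, Equiv.apply_symm_apply]
  have hσe : ∀ i, e (σ i) = φ (Set.rangeFactorization d i) := fun i =>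
    congrArg Subtype.val (hσ i)
  refine ⟨σ, fun i j => ?_⟩
  rw [hσe, hσe, Subtype.coe_inj, φ.injective.eq_iff, Set.rangeFactorization,
    Set.rangeFactorization, Subtype.mk.injEq]

end Fibers

namespace RotationStabilizer

section Matrices

variable {n : Type*} [DecidableEq n]

noncomputable def signDiag (s : Finset n) : Matrix n n ℝ :=
  diagonal fun l => if l ∈ s then -1 else 1

theorem transpose_signDiag (s : Finset n) : (signDiag s)ᵀ = signDiag s :=
  diagonal_transpose _

variable [Fintype n]

theorem det_mul_self_of_transpose_mul_self {U : Matrix n n ℝ} (hU : Uᵀ * U = 1) :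
    U.det * U.det = 1 := by
  simpa using congrArg det hU

theorem orthogonal_mul {A B : Matrix n n ℝ} (hA : Aᵀ * A = 1)
    (hB : Bᵀ * B = 1) : (A * B)ᵀ * (A * B) = 1 := by
  rw [transpose_mul, Matrix.mul_assoc, ← Matrix.mul_assoc Aᵀ, hA, Matrix.one_mul, hB]

theorem orthogonal_transpose {U : Matrix n n ℝ} (hU : Uᵀ * U = 1) : Uᵀᵀ * Uᵀ = 1 := by
  rw [transpose_transpose, mul_eq_one_comm.mp hU]

theorem transpose_mul_mul_cancel {U : Matrix n n ℝ} (hU : Uᵀ * U = 1) (A : Matrix n n ℝ) :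
    Uᵀ * (U * A) = A := by
  rw [← Matrix.mul_assoc, hU, Matrix.one_mul]

theorem transpose_mul_conj_mul {U : Matrix n n ℝ} (hU : Uᵀ * U = 1)
    (A : Matrix n n ℝ) : Uᵀ * (U * A * Uᵀ) * U = A := by
  simp only [Matrix.mul_assoc, hU, Matrix.mul_one, transpose_mul_mul_cancel hU]

theorem conj_eq_iff_mul_comm {V : Matrix n n ℝ} (hV : Vᵀ * V = 1)
    (X : Matrix n n ℝ) : V * X * Vᵀ = X ↔ V * X = X * V := by
  constructor <;> intro h
  · rw [← h, Matrix.mul_assoc _ Vᵀ, hV, Matrix.mul_one, h]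
  · rw [h, Matrix.mul_assoc, mul_eq_one_comm.mp hV, Matrix.mul_one]

theorem conj_smul_one {U : Matrix n n ℝ} (hU : U * Uᵀ = 1) (c : ℝ) :
    U * (c • 1) * Uᵀ = c • 1 := by
  rw [Matrix.mul_smul, Matrix.mul_one, Matrix.smul_mul, hU]

noncomputable def mult (X : Matrix n n ℝ) (μ : ℝ) : ℕ :=
  Module.finrank ℝ (LinearMap.ker (toLin' (X - μ • 1)))

noncomputable def multCount (X : Matrix n n ℝ) (m : ℕ) : ℕ :=
  {μ : ℝ | mult X μ = m}.ncard

theorem mult_add_rank (X : Matrix n n ℝ) (μ : ℝ) :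
    mult X μ + (X - μ • 1).rank = Fintype.card n := by
  rw [mult, Matrix.rank, ← toLin'_apply', add_comm, LinearMap.finrank_range_add_finrank_ker,
    Module.finrank_fintype_fun_eq_card]

theorem mult_conj {U : Matrix n n ℝ} (hU : Uᵀ * U = 1) (X : Matrix n n ℝ) (μ : ℝ) :
    mult (U * X * Uᵀ) μ = mult X μ := by
  have hdet : IsUnit U.det :=
    IsUnit.of_mul_eq_one _ (det_mul_self_of_transpose_mul_self hU)
  have hsub : U * X * Uᵀ - μ • 1 = U * (X - μ • 1) * Uᵀ := by
    rw [Matrix.mul_sub, Matrix.sub_mul, Matrix.mul_smul, Matrix.smul_mul, Matrix.mul_one,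
      mul_eq_one_comm.mp hU]
  have h := mult_add_rank (U * X * Uᵀ) μ
  rw [hsub, rank_mul_eq_left_of_isUnit_det _ _ (by rwa [det_transpose]),
    rank_mul_eq_right_of_isUnit_det _ _ hdet] at h
  linarith [mult_add_rank X μ]

theorem mult_diagonal (d : n → ℝ) (μ : ℝ) : mult (diagonal d) μ = #{i | d i = μ} := by
  have h := mult_add_rank (diagonal d) μ
  rw [smul_one_eq_diagonal, diagonal_sub, rank_diagonal, Fintype.card_subtype] at h
  simp only [ne_eq, sub_eq_zero] at h
  have := card_filter_add_card_filter_not (s := univ) (fun i => d i = μ)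
  rw [card_univ] at this
  omega

theorem multCount_conj {U : Matrix n n ℝ} (hU : Uᵀ * U = 1) (X : Matrix n n ℝ) (m : ℕ) :
    multCount (U * X * Uᵀ) m = multCount X m := by
  simp only [multCount, mult_conj hU]

theorem multCount_diagonal (d : n → ℝ) (m : ℕ) :
    multCount (diagonal d) m = {μ | #{i | d i = μ} = m}.ncard := by
  simp only [multCount, mult_diagonal]

theorem signDiag_mul_self (s : Finset n) : signDiag s * signDiag s = 1 := by
  rw [signDiag, diagonal_mul_diagonal, ← diagonal_one]
  congr 1
  ext l
  split_ifs <;> norm_num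

theorem det_signDiag (s : Finset n) : (signDiag s).det = (-1) ^ s.card := by
  rw [signDiag, det_diagonal, Fintype.prod_ite_mem, Finset.prod_const]

theorem signDiag_conj_apply (s : Finset n) (M : Matrix n n ℝ) (i j : n) :
    (signDiag s * M * (signDiag s)ᵀ) i j =
      (if i ∈ s then -1 else 1) * M i j * (if j ∈ s then -1 else 1) := by
  rw [transpose_signDiag, signDiag, mul_diagonal, diagonal_mul]

theorem signDiag_conj_diagonal (s : Finset n) (d : n → ℝ) :
    signDiag s * diagonal d * (signDiag s)ᵀ = diagonal d := by
  ext i j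
  rw [signDiag_conj_apply]
  rcases eq_or_ne i j with rfl | hij
  · split_ifs <;> simp
  · simp [hij]

theorem permMatrix_conj (σ : Equiv.Perm n) (M : Matrix n n ℝ) :
    σ.permMatrix ℝ * M * (σ.permMatrix ℝ)ᵀ = M.submatrix σ σ := by
  rw [transpose_permMatrix, PEquiv.toMatrix_toPEquiv_mul, PEquiv.mul_toMatrix_toPEquiv]
  rfl

theorem permMatrix_transpose_mul_self (σ : Equiv.Perm n) :
    (σ.permMatrix ℝ)ᵀ * σ.permMatrix ℝ = 1 := by
  rw [transpose_permMatrix, ← permMatrix_mul, mul_inv_cancel, permMatrix_one]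

noncomputable def quarterTurn (i j : n) : Matrix n n ℝ :=
  (Equiv.swap i j).permMatrix ℝ * signDiag {i}

theorem quarterTurn_conj (i j : n) (M : Matrix n n ℝ) :
    quarterTurn i j * M * (quarterTurn i j)ᵀ =
      (signDiag {i} * M * (signDiag {i})ᵀ).submatrix (Equiv.swap i j) (Equiv.swap i j) := by
  rw [← permMatrix_conj, quarterTurn, transpose_mul]
  simp only [Matrix.mul_assoc]

theorem quarterTurn_conj_diagonal (i j : n) (d : n → ℝ) :
    quarterTurn i j * diagonal d * (quarterTurn i j)ᵀ = diagonal (d ∘ Equiv.swap i j) := by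
  rw [quarterTurn_conj, signDiag_conj_diagonal, submatrix_diagonal_equiv]

end Matrices

section Stabilizers

variable {p : ℕ}

def stab (X : Matrix (Fin p) (Fin p) ℝ) : Set (Matrix (Fin p) (Fin p) ℝ) :=
  {V | IsSO V ∧ V * X * Vᵀ = X}

theorem conj_mem_stab_conj {U W Z : Matrix (Fin p) (Fin p) ℝ} (hU : Uᵀ * U = 1)
    (hW : W ∈ stab Z) : U * W * Uᵀ ∈ stab (U * Z * Uᵀ) := by
  obtain ⟨⟨hWo, hWdet⟩, hWZ⟩ := hW
  refine ⟨⟨?_, ?_⟩, ?_⟩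
  · simp only [transpose_mul, transpose_transpose, Matrix.mul_assoc, transpose_mul_mul_cancel hU,
      transpose_mul_mul_cancel hWo]
    exact mul_eq_one_comm.mp hU
  · rw [det_mul, det_mul, det_transpose, hWdet, mul_one, det_mul_self_of_transpose_mul_self hU]
  · calc U * W * Uᵀ * (U * Z * Uᵀ) * (U * W * Uᵀ)ᵀ = U * (W * Z * Wᵀ) * Uᵀ := by
          simp only [transpose_mul, transpose_transpose, Matrix.mul_assoc,
            transpose_mul_mul_cancel hU]
      _ = U * Z * Uᵀ := by rw [hWZ]

theorem stab_conj {U : Matrix (Fin p) (Fin p) ℝ} (hU : Uᵀ * U = 1)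
    (Z : Matrix (Fin p) (Fin p) ℝ) :
    stab (U * Z * Uᵀ) = (fun W => U * W * Uᵀ) '' stab Z := by
  have hUt := orthogonal_transpose hU
  refine Set.Subset.antisymm (fun V hV => ⟨Uᵀ * V * U, ?_, ?_⟩)
    (Set.image_subset_iff.2 fun W hW => conj_mem_stab_conj hU hW)
  · simpa [transpose_mul_conj_mul hU] using conj_mem_stab_conj hUt hV
  · simpa using transpose_mul_conj_mul hUt V

theorem mem_stab_diagonal_iff {d : Fin p → ℝ} {V : Matrix (Fin p) (Fin p) ℝ} :
    V ∈ stab (diagonal d) ↔ IsSO V ∧ ∀ i j, V i j = 0 ∨ d i = d j := by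
  refine and_congr_right fun hV => ?_
  rw [conj_eq_iff_mul_comm hV.1, ← Matrix.ext_iff]
  refine forall₂_congr fun i j => ?_
  rw [mul_diagonal, diagonal_mul, mul_comm (d i), mul_eq_mul_left_iff, eq_comm, or_comm]

theorem stab_diagonal_eq_of_forall_eq_iff {d e : Fin p → ℝ}
    (hde : ∀ i j, d i = d j ↔ e i = e j) :
    stab (diagonal d) = stab (diagonal e) := by
  ext V
  simp only [mem_stab_diagonal_iff, hde]

theorem signDiag_mem_stab_diagonal {s : Finset (Fin p)} (hs : Even s.card) (d : Fin p → ℝ) :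
    signDiag s ∈ stab (diagonal d) :=
  ⟨⟨by rw [transpose_signDiag, signDiag_mul_self], by rw [det_signDiag, hs.neg_one_pow]⟩,
    signDiag_conj_diagonal s d⟩

theorem isSO_quarterTurn {i j : Fin p} (hij : i ≠ j) : IsSO (quarterTurn i j) := by
  refine ⟨?_, ?_⟩
  · rw [quarterTurn, orthogonal_mul (permMatrix_transpose_mul_self _)]
    rw [transpose_signDiag, signDiag_mul_self]
  · simp [quarterTurn, det_signDiag, Equiv.Perm.sign_swap hij]

theorem quarterTurn_mem_stab_diagonal_iff {i j : Fin p} (hij : i ≠ j) (d : Fin p → ℝ) :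
    quarterTurn i j ∈ stab (diagonal d) ↔ d i = d j := by
  simp only [stab, Set.mem_ofPred_eq, isSO_quarterTurn hij, true_and, quarterTurn_conj_diagonal,
    diagonal_injective.eq_iff, funext_iff, Function.comp_apply]
  refine ⟨fun h => by simpa using (h i).symm, fun h l => ?_⟩
  rw [Equiv.swap_apply_def]
  split_ifs <;> simp_all

theorem stab_diagonal_eq_iff {d e : Fin p → ℝ} :
    stab (diagonal d) = stab (diagonal e) ↔ ∀ i j, d i = d j ↔ e i = e j := by
  refine ⟨fun h i j => ?_, stab_diagonal_eq_of_forall_eq_iff⟩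
  rcases eq_or_ne i j with rfl | hij
  · simp
  · rw [← quarterTurn_mem_stab_diagonal_iff hij, h, quarterTurn_mem_stab_diagonal_iff hij]

theorem isDiag_of_stab_diagonal_subset (hp : 3 ≤ p) {d : Fin p → ℝ}
    {Z : Matrix (Fin p) (Fin p) ℝ} (h : stab (diagonal d) ⊆ stab Z) : Z.IsDiag := by
  intro i j hij
  obtain ⟨k, -, hk⟩ := exists_mem_notMem_of_card_lt_card (s := {i, j}) (t := univ)
    (card_le_two.trans_lt (by rw [card_univ, Fintype.card_fin]; omega))
  simp only [Finset.mem_insert, Finset.mem_singleton, not_or] at hk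
  have hflip := congrFun₂ (h (signDiag_mem_stab_diagonal (s := {i, k})
    (by rw [Finset.card_pair (Ne.symm hk.1)]; exact even_two) d)).2 i j
  rw [signDiag_conj_apply] at hflip
  simp only [Finset.mem_insert, Finset.mem_singleton, true_or, ↓reduceIte, hij.symm,
    Ne.symm hk.2, or_self, neg_mul, one_mul, mul_one] at hflip
  linarith

theorem eq_smul_one_of_quarterTurn_mem_stab {Z : Matrix (Fin p) (Fin p) ℝ} (hZ : Z.IsSymm)
    {i j : Fin p} (hij : i ≠ j) (hcover : ∀ k, k = i ∨ k = j)
    (h : quarterTurn i j ∈ stab Z) :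
    Z = Z i i • 1 := by
  have hconj := h.2
  rw [quarterTurn_conj] at hconj
  have hii := congrFun₂ hconj i i
  have hij' := congrFun₂ hconj i j
  simp only [submatrix_apply, Equiv.swap_apply_left, Equiv.swap_apply_right, signDiag_conj_apply,
    Finset.mem_singleton, hij.symm, ↓reduceIte, one_mul, mul_one, mul_neg] at hii hij'
  have hsymm := hZ.apply i j
  ext a b
  rcases hcover a with rfl | rfl <;> rcases hcover b with rfl | rfl <;>
    simp only [Matrix.smul_apply, smul_eq_mul, one_apply_eq, one_apply_ne, hij, hij.symm, ne_eq,
      not_false_eq_true, mul_one, mul_zero] <;> linarith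

theorem eq_iff_eq_of_stab_diagonal_eq (hp : p ≤ 2) {d e : Fin p → ℝ}
    {W : Matrix (Fin p) (Fin p) ℝ} (hW : Wᵀ * W = 1)
    (h : stab (diagonal d) = stab (W * diagonal e * Wᵀ)) (i j : Fin p) :
    d i = d j ↔ e i = e j := by
  rcases eq_or_ne i j with rfl | hij
  · simp
  have hcover : ∀ k, k = i ∨ k = j := by
    have := Fin.val_ne_of_ne hij
    intro k
    simp only [Fin.ext_iff]
    omega
  have hscalar : ∀ c, diagonal e = c • 1 ↔ e i = c ∧ e j = c := by
    intro c
    rw [smul_one_eq_diagonal, diagonal_eq_diagonal_iff]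
    exact ⟨fun h => ⟨h i, h j⟩, fun h k => (hcover k).elim (· ▸ h.1) (· ▸ h.2)⟩
  rw [← quarterTurn_mem_stab_diagonal_iff hij, h]
  constructor
  · intro hturn
    have hZ := eq_smul_one_of_quarterTurn_mem_stab
      (by simp [IsSymm, transpose_mul, Matrix.mul_assoc]) hij hcover hturn
    have he := (hscalar _).1 <| by
      rw [← transpose_mul_conj_mul hW (diagonal e), hZ]
      simpa using conj_smul_one (U := Wᵀ) (by simpa using hW) _
    exact he.1.trans he.2.symm
  · intro he
    rw [(hscalar (e i)).2 ⟨rfl, he.symm⟩, conj_smul_one (mul_eq_one_comm.mp hW)]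
    exact ⟨isSO_quarterTurn hij, conj_smul_one (mul_eq_one_comm.mp (isSO_quarterTurn hij).1) _⟩

theorem exists_orthogonal_diagonalization {X : Matrix (Fin p) (Fin p) ℝ} (hX : X.IsHermitian) :
    ∃ (U : Matrix (Fin p) (Fin p) ℝ) (d : Fin p → ℝ),
      Uᵀ * U = 1 ∧ X = U * diagonal d * Uᵀ := by
  refine ⟨hX.eigenvectorUnitary, hX.eigenvalues, ?_, ?_⟩
  · have h := hX.eigenvectorUnitary.2
    rwa [Matrix.mem_unitaryGroup_iff', star_eq_conjTranspose,
      conjTranspose_eq_transpose_of_trivial] at h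
  · have h := hX.spectral_theorem
    rwa [Unitary.conjStarAlgAut_apply, star_eq_conjTranspose,
      conjTranspose_eq_transpose_of_trivial, RCLike.ofReal_real_eq_id, Function.id_comp] at h

theorem isHermitian_mul_mul_transpose {X : Matrix (Fin p) (Fin p) ℝ} (hX : X.IsHermitian)
    (U : Matrix (Fin p) (Fin p) ℝ) : (U * X * Uᵀ).IsHermitian := by
  simpa [conjTranspose_eq_transpose_of_trivial] using isHermitian_mul_mul_conjTranspose U hX

theorem multCount_eq_of_stab_diagonal_eq {d : Fin p → ℝ} {Z : Matrix (Fin p) (Fin p) ℝ}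
    (hZ : Z.IsHermitian) (h : stab (diagonal d) = stab Z) {m : ℕ} (hm : 0 < m) :
    multCount (diagonal d) m = multCount Z m := by
  rw [multCount_diagonal]
  rcases le_or_gt 3 p with hp | hp
  · have hZd := isDiag_of_stab_diagonal_subset hp h.le
    rw [← hZd.diagonal_diag] at h ⊢
    rw [multCount_diagonal]
    exact ncard_setOf_card_fiber_eq_of_forall_eq_iff (stab_diagonal_eq_iff.mp h) hm
  · obtain ⟨W, e, hW, rfl⟩ := exists_orthogonal_diagonalization hZ
    rw [multCount_conj hW, multCount_diagonal]
    exact ncard_setOf_card_fiber_eq_of_forall_eq_iff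
      (eq_iff_eq_of_stab_diagonal_eq (by omega) hW h) hm

theorem multCount_eq_of_stab_eq {X Y : Matrix (Fin p) (Fin p) ℝ} (hX : X.IsHermitian)
    (hY : Y.IsHermitian) (h : stab X = stab Y) {m : ℕ} (hm : 0 < m) :
    multCount X m = multCount Y m := by
  obtain ⟨U, d, hU, rfl⟩ := exists_orthogonal_diagonalization hX
  have hUt := orthogonal_transpose hU
  have hstab : stab (diagonal d) = stab (Uᵀ * Y * Uᵀᵀ) := by
    rw [stab_conj hUt, ← h, ← stab_conj hUt, transpose_transpose, transpose_mul_conj_mul hU]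
  rw [multCount_conj hU, ← multCount_conj hUt Y]
  exact multCount_eq_of_stab_diagonal_eq (isHermitian_mul_mul_transpose hY _) hstab hm

theorem exists_orthogonal_stab_eq {X Y : Matrix (Fin p) (Fin p) ℝ} (hX : X.IsHermitian)
    (hY : Y.IsHermitian) (h : ∀ m, 0 < m → multCount X m = multCount Y m) :
    ∃ U : Matrix (Fin p) (Fin p) ℝ, Uᵀ * U = 1 ∧ stab Y = stab (U * X * Uᵀ) := by
  obtain ⟨UX, d, hUX, rfl⟩ := exists_orthogonal_diagonalization hX
  obtain ⟨UY, e, hUY, rfl⟩ := exists_orthogonal_diagonalization hY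
  obtain ⟨σ, hσ⟩ := exists_equiv_forall_eq_iff_of_ncard_eq e d fun m hm => by
    simpa only [multCount_conj hUX, multCount_conj hUY, multCount_diagonal] using (h m hm).symm
  set P := Equiv.Perm.permMatrix ℝ σ
  refine ⟨UY * P * UXᵀ, orthogonal_mul (orthogonal_mul hUY (permMatrix_transpose_mul_self σ))
    (orthogonal_transpose hUX), ?_⟩
  have hconj : UY * P * UXᵀ * (UX * diagonal d * UXᵀ) * (UY * P * UXᵀ)ᵀ =
      UY * diagonal (d ∘ σ) * UYᵀ := by
    rw [← submatrix_diagonal_equiv, ← permMatrix_conj]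
    simp only [P, transpose_mul, transpose_transpose, Matrix.mul_assoc,
      transpose_mul_mul_cancel hUX]
  rw [hconj, stab_conj hUY, stab_conj hUY, stab_diagonal_eq_of_forall_eq_iff (e := d ∘ σ) hσ]

theorem exists_isSO_conj_eq {X : Matrix (Fin p) (Fin p) ℝ} (hX : X.IsHermitian)
    {U : Matrix (Fin p) (Fin p) ℝ} (hU : Uᵀ * U = 1) :
    ∃ Q, IsSO Q ∧ Q * X * Qᵀ = U * X * Uᵀ := by
  rcases mul_self_eq_one_iff.mp (det_mul_self_of_transpose_mul_self hU) with hdet | hdet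
  · exact ⟨U, ⟨hU, hdet⟩, rfl⟩
  have hp : 0 < p := Nat.pos_of_ne_zero fun hp => by subst hp; norm_num [det_fin_zero] at hdet
  obtain ⟨W, d, hW, rfl⟩ := exists_orthogonal_diagonalization hX
  set S := signDiag {(⟨0, hp⟩ : Fin p)}
  have hS : Sᵀ * S = 1 := by rw [transpose_signDiag, signDiag_mul_self]
  refine ⟨U * (W * S * Wᵀ), ⟨orthogonal_mul hU
    (orthogonal_mul (orthogonal_mul hW hS) (orthogonal_transpose hW)), ?_⟩, ?_⟩
  · simp only [det_mul, det_transpose, hdet, S, det_signDiag, Finset.card_singleton]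
    linear_combination det_mul_self_of_transpose_mul_self hW
  · calc U * (W * S * Wᵀ) * (W * diagonal d * Wᵀ) * (U * (W * S * Wᵀ))ᵀ =
        U * (W * (S * diagonal d * Sᵀ) * Wᵀ) * Uᵀ := by
          simp only [transpose_mul, transpose_transpose, Matrix.mul_assoc,
            transpose_mul_mul_cancel hW]
      _ = U * (W * diagonal d * Wᵀ) * Uᵀ := by rw [signDiag_conj_diagonal]

end Stabilizers

end RotationStabilizer

open RotationStabilizer

theorem stmt4 (p : ℕ) (X Y : Matrix (Fin p) (Fin p) ℝ)
    (hX : X.PosDef) (hY : Y.PosDef) :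
    (∃ Q : Matrix (Fin p) (Fin p) ℝ, IsSO Q ∧
        { V : Matrix (Fin p) (Fin p) ℝ | IsSO V ∧ V * Y * Vᵀ = Y } =
          (fun W => Q * W * Q⁻¹) ''
            { V : Matrix (Fin p) (Fin p) ℝ | IsSO V ∧ V * X * Vᵀ = X }) ↔
      ∀ m : ℕ, 0 < m →
        Set.ncard { μ : ℝ |
            Module.finrank ℝ (LinearMap.ker (Matrix.toLin' (X - μ • 1))) = m } =
        Set.ncard { μ : ℝ |
            Module.finrank ℝ (LinearMap.ker (Matrix.toLin' (Y - μ • 1))) = m } := by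
  change (∃ Q, IsSO Q ∧ stab Y = (fun W => Q * W * Q⁻¹) '' stab X) ↔
    ∀ m, 0 < m → multCount X m = multCount Y m
  have hinv : ∀ {Q : Matrix (Fin p) (Fin p) ℝ}, IsSO Q → Q⁻¹ = Qᵀ := fun hQ =>
    inv_eq_left_inv hQ.1
  constructor
  · rintro ⟨Q, hQ, hYX⟩ m hm
    rw [hinv hQ, ← stab_conj hQ.1] at hYX
    rw [← multCount_conj hQ.1 X]
    exact multCount_eq_of_stab_eq (isHermitian_mul_mul_transpose hX.1 Q) hY.1 hYX.symm hm
  · intro h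
    obtain ⟨U, hU, hYU⟩ := exists_orthogonal_stab_eq hX.1 hY.1 h
    obtain ⟨Q, hQ, hQU⟩ := exists_isSO_conj_eq hX.1 hU
    exact ⟨Q, hQ, by rw [hinv hQ, ← stab_conj hQ.1, hQU, hYU]⟩
end

section
/- Fix a weight k > 0 and let X, Y be 3×3 SPD matrices each having three distinct eigenvalues, with (U,D) ∈ E_X and (V,Λ) ∈ E_Y. Then d_SR(X,Y)² = min{ (k/2)·logdist(U⁻¹·V·P⁻¹)² + ‖Log D − Log(P·Λ·P⁻¹)‖_F² : P an even 3×3 signed permutation matrix }. -/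
open Matrix

/-!
Two eigendecompositions `(U, D)`, `(U', D')` of the same SPD matrix give an orthogonal
`S = Uᵀ U'` with `S D' = D S`. Entrywise this reads `S i j (D' j j - D i i) = 0`, so when the
eigenvalues are distinct every column of `S` has a single nonzero entry, and orthogonality makes
`S` an even signed permutation. The distance `d_M` is invariant under the right action
`(U, D) ↦ (U S, Sᵀ D S)` of signed permutations, so for `U' = U S₁` and `V' = V S₂` acting by
`S₁⁻¹` replaces the pair of fiber points by `(U, D)` and `(V P⁻¹, P Λ P⁻¹)` with `P = S₁ S₂ᵀ`. The infimum defining `d_SR` is then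
taken over finitely many values and is attained.
-/

variable {p : ℕ}

def signedPermMatrix (σ : Equiv.Perm (Fin p)) (ε : Fin p → ℝ) : Matrix (Fin p) (Fin p) ℝ :=
  of fun i j => if i = σ j then ε j else 0

@[simp]
lemma signedPermMatrix_apply (σ : Equiv.Perm (Fin p)) (ε : Fin p → ℝ) (i j : Fin p) :
    signedPermMatrix σ ε i j = if i = σ j then ε j else 0 := rfl

lemma signedPermMatrix_mul (σ τ : Equiv.Perm (Fin p)) (ε δ : Fin p → ℝ) :
    signedPermMatrix σ ε * signedPermMatrix τ δ =
      signedPermMatrix (σ * τ) fun j => ε (τ j) * δ j := by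
  ext i j
  rw [mul_apply, Finset.sum_eq_single (τ j) (fun b _ hb => by simp [hb]) (by simp)]
  simp only [signedPermMatrix_apply, if_true, ite_mul, zero_mul]
  rfl

lemma transpose_signedPermMatrix_mul_mul_apply (σ : Equiv.Perm (Fin p)) (ε : Fin p → ℝ)
    (A : Matrix (Fin p) (Fin p) ℝ) (i j : Fin p) :
    ((signedPermMatrix σ ε)ᵀ * A * signedPermMatrix σ ε) i j = ε i * ε j * A (σ i) (σ j) := by
  rw [mul_apply, Finset.sum_eq_single (σ j) (fun b _ hb => by simp [hb]) (by simp),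
    mul_apply, Finset.sum_eq_single (σ i) (fun b _ hb => by simp [hb]) (by simp)]
  simp only [transpose_apply, signedPermMatrix_apply, if_true]
  ring

lemma isSignedPerm_signedPermMatrix {σ : Equiv.Perm (Fin p)} {ε : Fin p → ℝ}
    (hε : ∀ j, ε j * ε j = 1) : IsSignedPerm (signedPermMatrix σ ε) := by
  have hε0 : ∀ j, ε j ≠ 0 := fun j h => by simpa [h] using hε j
  refine ⟨fun i => ⟨σ.symm i, by simp [hε0], fun j hj => ?_⟩,
    fun j => ⟨σ j, by simp [hε0], fun i hi => ?_⟩, fun i j => ?_⟩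
  · simp only [signedPermMatrix_apply, ne_eq, ite_eq_right_iff, not_forall] at hj
    simp [hj.1]
  · simp only [signedPermMatrix_apply, ne_eq, ite_eq_right_iff, not_forall] at hi
    exact hi.1
  · by_cases h : i = σ j
    · simpa [h] using Or.inr (mul_self_eq_one_iff.mp (hε j))
    · simp [h]

lemma IsSignedPerm.exists_eq_signedPermMatrix {M : Matrix (Fin p) (Fin p) ℝ}
    (h : IsSignedPerm M) :
    ∃ (σ : Equiv.Perm (Fin p)) (ε : Fin p → ℝ), (∀ j, ε j * ε j = 1) ∧
      M = signedPermMatrix σ ε := by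
  obtain ⟨hrow, hcol, hval⟩ := h
  choose f hf hf' using hcol
  have hinj : Function.Injective f := fun j j' he =>
    (hrow (f j)).unique (hf j) (he ▸ hf j')
  refine ⟨Equiv.ofBijective f hinj.bijective_of_finite, fun j => M (f j) j, fun j => ?_, ?_⟩
  · rcases hval (f j) j with h | h | h
    · exact absurd h (hf j)
    all_goals simp [h]
  · ext i j
    by_cases hij : i = f j
    · simp [hij]
    · simpa [hij] using not_not.mp (mt (hf' j i) hij)

namespace IsSignedPerm

variable {S T : Matrix (Fin p) (Fin p) ℝ}

lemma transpose (hS : IsSignedPerm S) : IsSignedPerm Sᵀ :=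
  ⟨hS.2.1, hS.1, fun i j => hS.2.2 j i⟩

lemma mul (hS : IsSignedPerm S) (hT : IsSignedPerm T) : IsSignedPerm (S * T) := by
  obtain ⟨σ, ε, hε, rfl⟩ := hS.exists_eq_signedPermMatrix
  obtain ⟨τ, δ, hδ, rfl⟩ := hT.exists_eq_signedPermMatrix
  rw [signedPermMatrix_mul]
  exact isSignedPerm_signedPermMatrix fun j => by
    rw [mul_mul_mul_comm, hε, hδ, one_mul]

lemma transpose_mul_self (hS : IsSignedPerm S) : Sᵀ * S = 1 := by
  obtain ⟨σ, ε, hε, rfl⟩ := hS.exists_eq_signedPermMatrix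
  ext i j
  rw [← Matrix.mul_one (signedPermMatrix σ ε)ᵀ, transpose_signedPermMatrix_mul_mul_apply]
  by_cases h : i = j
  · subst h
    simp [hε]
  · simp [h]

lemma mul_transpose_self (hS : IsSignedPerm S) : S * Sᵀ = 1 :=
  mul_eq_one_comm.mp hS.transpose_mul_self

lemma logDiag_conj (hS : IsSignedPerm S) (A : Matrix (Fin p) (Fin p) ℝ) :
    logDiag (Sᵀ * A * S) = Sᵀ * logDiag A * S := by
  obtain ⟨σ, ε, hε, rfl⟩ := hS.exists_eq_signedPermMatrix
  ext i j
  rw [transpose_signedPermMatrix_mul_mul_apply]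
  by_cases h : i = j
  · simp [logDiag, h, transpose_signedPermMatrix_mul_mul_apply, hε]
  · simp [logDiag, h]

lemma isPosDiag_conj (hS : IsSignedPerm S) {Λ : Matrix (Fin p) (Fin p) ℝ}
    (hΛ : IsPosDiag Λ) : IsPosDiag (Sᵀ * Λ * S) := by
  obtain ⟨σ, ε, hε, rfl⟩ := hS.exists_eq_signedPermMatrix
  refine ⟨fun i j h => ?_, fun i => ?_⟩
  · change ((signedPermMatrix σ ε)ᵀ * Λ * signedPermMatrix σ ε) i j = 0
    rw [transpose_signedPermMatrix_mul_mul_apply, hΛ.1 (σ.injective.ne h), mul_zero]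
  · rw [transpose_signedPermMatrix_mul_mul_apply, hε, one_mul]
    exact hΛ.2 _

end IsSignedPerm

lemma finite_setOf_isSignedPerm : {M : Matrix (Fin p) (Fin p) ℝ | IsSignedPerm M}.Finite :=
  (Set.Finite.pi' fun _ => Set.Finite.pi' fun _ => ({0, 1, -1} : Set ℝ).toFinite).subset
    fun _ hM i j => hM.2.2 i j

lemma isEvenSignedPerm_one : IsEvenSignedPerm (1 : Matrix (Fin p) (Fin p) ℝ) := by
  refine ⟨?_, det_one⟩
  have h : signedPermMatrix 1 (fun _ => 1) = (1 : Matrix (Fin p) (Fin p) ℝ) := by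
    ext i j
    by_cases h : i = j <;> simp [h, one_apply]
  exact h ▸ isSignedPerm_signedPermMatrix fun _ => one_mul 1

section OrthogonalInvariance

variable {S : Matrix (Fin p) (Fin p) ℝ}

lemma frob_conj (hS : Sᵀ * S = 1) (A : Matrix (Fin p) (Fin p) ℝ) :
    frob (Sᵀ * A * S) = frob A := by
  have hS' : S * Sᵀ = 1 := mul_eq_one_comm.mp hS
  have hsum : ∀ B : Matrix (Fin p) (Fin p) ℝ, ∑ i, ∑ j, B i j ^ 2 = trace (B * Bᵀ) := fun B => by
    simp [trace, mul_apply, sq]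
  unfold frob
  rw [hsum, hsum]
  congr 1
  calc trace (Sᵀ * A * S * (Sᵀ * A * S)ᵀ) = trace (Sᵀ * (A * Aᵀ) * S) := by
        simp only [transpose_mul, transpose_transpose, Matrix.mul_assoc]
        rw [← Matrix.mul_assoc S Sᵀ, hS', Matrix.one_mul]
    _ = trace (A * Aᵀ) := by rw [trace_mul_cycle, hS', Matrix.one_mul]

lemma logdist_conj (hS : Sᵀ * S = 1) (Q : Matrix (Fin p) (Fin p) ℝ) :
    logdist (Sᵀ * Q * S) = logdist Q := by
  have hconj : ∀ {R M : Matrix (Fin p) (Fin p) ℝ}, Rᵀ * R = 1 →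
      { r | ∃ A : Matrix (Fin p) (Fin p) ℝ, Aᵀ = -A ∧ NormedSpace.exp A = M ∧ r = frob A } ⊆
      { r | ∃ A : Matrix (Fin p) (Fin p) ℝ,
        Aᵀ = -A ∧ NormedSpace.exp A = Rᵀ * M * R ∧ r = frob A } := by
    rintro R M hR _ ⟨A, hskew, hexp, rfl⟩
    have hR_unit : IsUnit R := (isUnit_iff_isUnit_det R).mpr (isUnit_det_of_left_inverse hR)
    refine ⟨Rᵀ * A * R, ?_, ?_, (frob_conj hR A).symm⟩
    · simp [transpose_mul, hskew, Matrix.mul_assoc]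
    · rw [← inv_eq_left_inv hR, exp_conj' R A hR_unit, hexp]
  have hS' : S * Sᵀ = 1 := mul_eq_one_comm.mp hS
  have hQ : Sᵀᵀ * (Sᵀ * Q * S) * Sᵀ = Q := by
    rw [transpose_transpose, ← Matrix.mul_assoc, ← Matrix.mul_assoc, hS', Matrix.one_mul,
      Matrix.mul_assoc, hS', Matrix.mul_one]
  have h := hconj (R := Sᵀ) (M := Sᵀ * Q * S) (by rwa [transpose_transpose])
  rw [hQ] at h
  unfold logdist
  rw [subset_antisymm h (hconj hS)]

end OrthogonalInvariance

lemma isSignedPerm_of_orthogonal {S : Matrix (Fin p) (Fin p) ℝ} (hS : Sᵀ * S = 1)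
    (hcol : ∀ i i' j, S i j ≠ 0 → S i' j ≠ 0 → i = i') : IsSignedPerm S := by
  have hinner : ∀ j j', ∑ a, S a j * S a j' = (1 : Matrix (Fin p) (Fin p) ℝ) j j' :=
    fun j j' => by rw [← hS, mul_apply]; rfl
  have hsingle : ∀ i j j', S i j ≠ 0 → ∑ a, S a j * S a j' = S i j * S i j' :=
    fun i j j' hij => Finset.sum_eq_single i
      (fun a _ ha => by rw [not_not.mp fun h => ha (hcol a i j h hij), zero_mul]) (by simp)
  have hrow : ∀ i, ∃ j, S i j ≠ 0 := fun i => by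
    have h : ∑ b, S i b * S i b = 1 := by
      simpa [mul_apply] using
        congrArg (fun M : Matrix (Fin p) (Fin p) ℝ => M i i) (mul_eq_one_comm.mp hS)
    obtain ⟨j, -, hj⟩ := Finset.exists_ne_zero_of_sum_ne_zero (h ▸ one_ne_zero)
    exact ⟨j, left_ne_zero_of_mul hj⟩
  have hcolumn : ∀ j, ∃ i, S i j ≠ 0 := fun j => by
    have h : ∑ a, S a j * S a j ≠ 0 := by rw [hinner, one_apply_eq]; exact one_ne_zero
    obtain ⟨i, -, hi⟩ := Finset.exists_ne_zero_of_sum_ne_zero h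
    exact ⟨i, left_ne_zero_of_mul hi⟩
  refine ⟨fun i => ?_, fun j => ?_, fun i j => ?_⟩
  · obtain ⟨j, hj⟩ := hrow i
    refine ⟨j, hj, fun j' hj' => by_contra fun hne => mul_ne_zero hj' hj ?_⟩
    rw [← hsingle i j' j hj', hinner, one_apply_ne hne]
  · obtain ⟨i, hi⟩ := hcolumn j
    exact ⟨i, hi, fun i' hi' => hcol i' i j hi' hi⟩
  · by_cases h : S i j = 0
    · exact Or.inl h
    · rw [← mul_self_eq_one_iff, ← hsingle i j j h, hinner, one_apply_eq]
      exact Or.inr rfl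

lemma diag_eq_of_mul_eq_mul_of_ne_zero {S D D' : Matrix (Fin p) (Fin p) ℝ} (hD : D.IsDiag)
    (hD' : D'.IsDiag) (h : S * D' = D * S) {i j : Fin p} (hij : S i j ≠ 0) :
    D i i = D' j j := by
  rw [← hD.diagonal_diag, ← hD'.diagonal_diag] at h
  have h := congr_fun₂ h i j
  rw [mul_diagonal, diagonal_mul, diag_apply, diag_apply] at h
  exact mul_right_cancel₀ hij (h.symm.trans (mul_comm _ _))

lemma exists_isEvenSignedPerm_of_mem_fiber {X U D U' D' : Matrix (Fin p) (Fin p) ℝ}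
    (h : (U, D) ∈ fiber X) (h' : (U', D') ∈ fiber X) (hD : Function.Injective fun i => D i i) :
    ∃ S, IsEvenSignedPerm S ∧ U' = U * S ∧ D' = Sᵀ * D * S := by
  obtain ⟨⟨hUo, hUdet⟩, ⟨hDd, -⟩, hX⟩ := h
  obtain ⟨⟨hU'o, hU'det⟩, ⟨hD'd, -⟩, hX'⟩ := h'
  dsimp only at hUo hUdet hDd hX hU'o hU'det hD'd hX'
  have hUo' : U * Uᵀ = 1 := mul_eq_one_comm.mp hUo
  obtain ⟨S, hS⟩ : ∃ S, S = Uᵀ * U' := ⟨_, rfl⟩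
  have hSo : Sᵀ * S = 1 := by
    rw [hS, transpose_mul, transpose_transpose, Matrix.mul_assoc, ← Matrix.mul_assoc U, hUo',
      Matrix.one_mul, hU'o]
  have hconj : D' = Sᵀ * D * S := calc
    D' = U'ᵀ * (U' * D' * U'ᵀ) * U' := by
      simp only [← Matrix.mul_assoc, hU'o, Matrix.one_mul]
      rw [Matrix.mul_assoc, hU'o, Matrix.mul_one]
    _ = Sᵀ * D * S := by
      simp only [hX', ← hX, hS, transpose_mul, transpose_transpose, Matrix.mul_assoc]
  have hcomm : S * D' = D * S := by
    rw [hconj, ← Matrix.mul_assoc, ← Matrix.mul_assoc, mul_eq_one_comm.mp hSo, Matrix.one_mul]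
  have hsp : IsSignedPerm S := isSignedPerm_of_orthogonal hSo fun i i' j hi hi' =>
    hD ((diag_eq_of_mul_eq_mul_of_ne_zero hDd hD'd hcomm hi).trans
      (diag_eq_of_mul_eq_mul_of_ne_zero hDd hD'd hcomm hi').symm)
  refine ⟨S, ⟨hsp, ?_⟩, ?_, hconj⟩
  · rw [hS, det_mul, det_transpose, hUdet, hU'det, one_mul]
  · rw [hS, ← Matrix.mul_assoc, hUo', Matrix.one_mul]

lemma IsEvenSignedPerm.transpose {S : Matrix (Fin p) (Fin p) ℝ} (hS : IsEvenSignedPerm S) :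
    IsEvenSignedPerm Sᵀ :=
  ⟨hS.1.transpose, by rw [det_transpose, hS.2]⟩

lemma IsEvenSignedPerm.mul_mem_fiber {S Y V Λ : Matrix (Fin p) (Fin p) ℝ}
    (hS : IsEvenSignedPerm S) (h : (V, Λ) ∈ fiber Y) : (V * S, Sᵀ * Λ * S) ∈ fiber Y := by
  obtain ⟨⟨hVo, hVdet⟩, hΛ, hY⟩ := h
  dsimp only at hVo hVdet hΛ hY
  have hSo := hS.1.transpose_mul_self
  have hSo' := hS.1.mul_transpose_self
  refine ⟨⟨?_, ?_⟩, hS.1.isPosDiag_conj hΛ, ?_⟩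
  · rw [transpose_mul, Matrix.mul_assoc, ← Matrix.mul_assoc Vᵀ, hVo, Matrix.one_mul, hSo]
  · rw [det_mul, hVdet, hS.2, one_mul]
  · simp only [transpose_mul, Matrix.mul_assoc]
    rw [← Matrix.mul_assoc S Sᵀ, hSo', Matrix.one_mul, ← Matrix.mul_assoc S Sᵀ, hSo',
      Matrix.one_mul, ← hY, Matrix.mul_assoc]

lemma IsSignedPerm.dM_mul_conj {S : Matrix (Fin p) (Fin p) ℝ} (hS : IsSignedPerm S) (k : ℝ)
    (U D V Λ : Matrix (Fin p) (Fin p) ℝ) :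
    dM k (U * S, Sᵀ * D * S) (V * S, Sᵀ * Λ * S) = dM k (U, D) (V, Λ) := by
  have hSo := hS.transpose_mul_self
  simp only [dM]
  rw [Matrix.mul_inv_rev, inv_eq_left_inv hSo, Matrix.mul_assoc, ← Matrix.mul_assoc U⁻¹,
    ← Matrix.mul_assoc, logdist_conj hSo, hS.logDiag_conj, hS.logDiag_conj, ← Matrix.sub_mul,
    ← Matrix.mul_sub, frob_conj hSo]

noncomputable def alignedCost (k : ℝ) (U D V Λ P : Matrix (Fin p) (Fin p) ℝ) : ℝ :=
  (k / 2) * logdist (U⁻¹ * V * P⁻¹) ^ 2 + frob (logDiag D - logDiag (P * Λ * P⁻¹)) ^ 2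

lemma alignedCost_nonneg {k : ℝ} (hk : 0 ≤ k) (U D V Λ P : Matrix (Fin p) (Fin p) ℝ) :
    0 ≤ alignedCost k U D V Λ P := by
  unfold alignedCost
  positivity

lemma dM_eq_sqrt_alignedCost (k : ℝ) (U D V Λ P : Matrix (Fin p) (Fin p) ℝ) :
    dM k (U, D) (V * P⁻¹, P * Λ * P⁻¹) = √(alignedCost k U D V Λ P) := by
  simp only [dM, alignedCost, Matrix.mul_assoc]

lemma dSR_eq_sInf_sqrt_alignedCost (k : ℝ) {X Y U D V Λ : Matrix (Fin p) (Fin p) ℝ}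
    (hUD : (U, D) ∈ fiber X) (hVL : (V, Λ) ∈ fiber Y)
    (hD : Function.Injective fun i => D i i) (hL : Function.Injective fun i => Λ i i) :
    dSR k X Y = sInf (Real.sqrt ''
      {r | ∃ P, IsEvenSignedPerm P ∧ r = alignedCost k U D V Λ P}) := by
  rw [dSR]
  congr 1
  ext r
  constructor
  · rintro ⟨⟨U', D'⟩, hUD', ⟨V', Λ'⟩, hVL', rfl⟩
    obtain ⟨S₁, hS₁, rfl, rfl⟩ := exists_isEvenSignedPerm_of_mem_fiber hUD hUD' hD
    obtain ⟨S₂, hS₂, rfl, rfl⟩ := exists_isEvenSignedPerm_of_mem_fiber hVL hVL' hL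
    have hP : IsEvenSignedPerm (S₁ * S₂ᵀ) :=
      ⟨hS₁.1.mul hS₂.1.transpose, by rw [det_mul, det_transpose, hS₁.2, hS₂.2, one_mul]⟩
    have hPinv : (S₁ * S₂ᵀ)⁻¹ = S₂ * S₁ᵀ := by
      rw [inv_eq_left_inv hP.1.transpose_mul_self, transpose_mul, transpose_transpose]
    have hcancel : ∀ M : Matrix (Fin p) (Fin p) ℝ, S₁ᵀ * (S₁ * M) = M := fun M => by
      rw [← Matrix.mul_assoc, hS₁.1.transpose_mul_self, Matrix.one_mul]
    refine ⟨_, ⟨S₁ * S₂ᵀ, hP, rfl⟩, ?_⟩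
    rw [← dM_eq_sqrt_alignedCost, ← hS₁.1.dM_mul_conj k, hPinv]
    simp only [Matrix.mul_assoc, hcancel, hS₁.1.transpose_mul_self, Matrix.mul_one]
  · rintro ⟨_, ⟨P, hP, rfl⟩, rfl⟩
    have hPinv : P⁻¹ = Pᵀ := inv_eq_left_inv hP.1.transpose_mul_self
    refine ⟨(U, D), hUD, (V * P⁻¹, P * Λ * P⁻¹), ?_, (dM_eq_sqrt_alignedCost k U D V Λ P).symm⟩
    simpa only [hPinv, transpose_transpose] using hP.transpose.mul_mem_fiber hVL

lemma sq_sInf_sqrt_image_of_isLeast {S : Set ℝ} {m : ℝ} (hm : IsLeast S m) (h0 : 0 ≤ m) :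
    sInf (Real.sqrt '' S) ^ 2 = m := by
  rw [(Real.sqrt_monotone.map_isLeast hm).csInf_eq, Real.sq_sqrt h0]

theorem stmt6 (k : ℝ) (hk : 0 < k)
    (X Y U D V Λ : Matrix (Fin 3) (Fin 3) ℝ)
    (hUD : (U, D) ∈ fiber X) (hVL : (V, Λ) ∈ fiber Y)
    (hD : Function.Injective fun i => D i i)
    (hL : Function.Injective fun i => Λ i i) :
    IsLeast { r : ℝ | ∃ P : Matrix (Fin 3) (Fin 3) ℝ, IsEvenSignedPerm P ∧
        r = (k / 2) * logdist (U⁻¹ * V * P⁻¹) ^ 2 +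
          frob (logDiag D - logDiag (P * Λ * P⁻¹)) ^ 2 }
      (dSR k X Y ^ 2) := by
  change IsLeast {r | ∃ P, IsEvenSignedPerm P ∧ r = alignedCost k U D V Λ P} _
  have hfin : {r | ∃ P, IsEvenSignedPerm P ∧ r = alignedCost k U D V Λ P}.Finite :=
    ((finite_setOf_isSignedPerm.subset fun _ hP => hP.1).image _).subset
      fun _ ⟨P, hP, hr⟩ => ⟨P, hP, hr.symm⟩
  obtain ⟨m, hm⟩ := hfin.isCompact.exists_isLeast ⟨_, 1, isEvenSignedPerm_one, rfl⟩
  have h0 : 0 ≤ m := by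
    obtain ⟨P, -, hmP⟩ := hm.1
    exact hmP ▸ alignedCost_nonneg hk.le U D V Λ P
  rwa [dSR_eq_sInf_sqrt_alignedCost k hUD hVL hD hL, sq_sInf_sqrt_image_of_isLeast hm h0]
end

section
/- Fix a weight k > 0, let c > 0, let X = c·I be the 3×3 SPD matrix with single eigenvalue c, and let Y be any 3×3 SPD matrix with (V,Λ) ∈ E_Y. Then d_SR(X,Y) = ‖Log(c·I) − Log Λ‖_F, i.e., d_SR(X,Y)² = Σᵢ (log c − log λᵢ)² where λ₁, λ₂, λ₃ are the diagonal entries of Λ. -/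
open Matrix

/-!
Since `D = Uᵀ (c I) U = c I` for every `(U, D) ∈ E_{cI}`, the fiber of `c I` is `SO(p) × {c I}`.
Taking `U = V` kills the rotation term, so `d_SR ≤ ‖Log(c I) − Log Λ‖_F`. Conversely, the
scaling term of any pair `((U, c I), (V', Λ'))` is the same number: `Λ'` and `Λ` are conjugate
diagonal matrices, so their diagonals are the same multiset, namely the roots of the common
characteristic polynomial.
-/

open Polynomial

theorem Matrix.IsDiag.roots_charpoly {n R : Type*} [Fintype n] [DecidableEq n]
    [CommRing R] [IsDomain R] {A : Matrix n n R} (hA : A.IsDiag) :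
    A.charpoly.roots = Finset.univ.val.map A.diag := by
  conv_lhs => rw [← hA.diagonal_diag, charpoly_diagonal, Finset.prod_eq_multiset_prod]
  simpa only [Multiset.map_map, Function.comp_def] using
    roots_multiset_prod_X_sub_C (Finset.univ.val.map A.diag)

theorem Matrix.sum_comp_diag_eq_of_conj {n R M : Type*} [Fintype n] [DecidableEq n]
    [CommRing R] [IsDomain R] [AddCommMonoid M] {A B P Q : Matrix n n R}
    (hA : A.IsDiag) (hB : B.IsDiag) (hQP : Q * P = 1) (hB' : B = P * A * Q) (f : R → M) :
    ∑ i, f (B i i) = ∑ i, f (A i i) := by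
  have hchar : B.charpoly = A.charpoly := by
    rw [hB', Matrix.mul_assoc, charpoly_mul_comm, Matrix.mul_assoc, hQP, Matrix.mul_one]
  have hdiag : Finset.univ.val.map B.diag = Finset.univ.val.map A.diag := by
    rw [← hA.roots_charpoly, ← hB.roots_charpoly, hchar]
  simpa only [Finset.sum_eq_multiset_sum, Multiset.map_map, Function.comp_def, diag_apply] using
    congrArg (fun s => (s.map f).sum) hdiag

section

variable {p : ℕ}

lemma IsSO.isUnit_det {U : Matrix (Fin p) (Fin p) ℝ} (hU : IsSO U) : IsUnit U.det :=
  hU.2 ▸ isUnit_one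

lemma frob_nonneg (A : Matrix (Fin p) (Fin p) ℝ) : 0 ≤ frob A :=
  Real.sqrt_nonneg _

lemma frob_diagonal (d : Fin p → ℝ) : frob (diagonal d) = √(∑ i, d i ^ 2) := by
  unfold frob
  congr 1
  refine Finset.sum_congr rfl fun i _ => ?_
  rw [Finset.sum_eq_single i (fun j _ hj => by simp [diagonal_apply_ne _ hj.symm]) (by simp),
    diagonal_apply_eq]

lemma frob_logDiag_sub (D L : Matrix (Fin p) (Fin p) ℝ) :
    frob (logDiag D - logDiag L) = √(∑ i, (Real.log (D i i) - Real.log (L i i)) ^ 2) := by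
  rw [logDiag, logDiag, diagonal_sub, frob_diagonal]

lemma logdist_one : logdist (1 : Matrix (Fin p) (Fin p) ℝ) = 0 := by
  refine IsLeast.csInf_eq ⟨⟨0, by simp, NormedSpace.exp_zero, by simp [frob]⟩, ?_⟩
  rintro r ⟨A, -, -, rfl⟩
  exact frob_nonneg A

lemma dM_mk_self_fst (k : ℝ) {U : Matrix (Fin p) (Fin p) ℝ} (hU : IsUnit U.det)
    (D L : Matrix (Fin p) (Fin p) ℝ) :
    dM k (U, D) (U, L) = frob (logDiag D - logDiag L) := by
  simp [dM, nonsing_inv_mul U hU, logdist_one, Real.sqrt_sq (frob_nonneg _)]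

lemma frob_logDiag_sub_le_dM {k : ℝ} (hk : 0 ≤ k)
    (UD VL : Matrix (Fin p) (Fin p) ℝ × Matrix (Fin p) (Fin p) ℝ) :
    frob (logDiag UD.2 - logDiag VL.2) ≤ dM k UD VL :=
  Real.le_sqrt_of_sq_le (le_add_of_nonneg_left (by positivity))

lemma snd_eq_of_mem_fiber {X : Matrix (Fin p) (Fin p) ℝ}
    {UD : Matrix (Fin p) (Fin p) ℝ × Matrix (Fin p) (Fin p) ℝ} (h : UD ∈ fiber X) :
    UD.2 = UD.1ᵀ * X * UD.1 := by
  rw [← h.2.2, Matrix.mul_assoc, Matrix.mul_assoc, h.1.1, Matrix.mul_one, ← Matrix.mul_assoc,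
    h.1.1, Matrix.one_mul]

lemma sum_comp_diag_eq_of_mem_fiber {Y : Matrix (Fin p) (Fin p) ℝ}
    {UD VL : Matrix (Fin p) (Fin p) ℝ × Matrix (Fin p) (Fin p) ℝ}
    (hUD : UD ∈ fiber Y) (hVL : VL ∈ fiber Y) (f : ℝ → ℝ) :
    ∑ i, f (VL.2 i i) = ∑ i, f (UD.2 i i) := by
  refine sum_comp_diag_eq_of_conj hUD.2.1.1 hVL.2.1.1 (P := VL.1ᵀ * UD.1)
    (Q := UD.1ᵀ * VL.1) ?_ ?_ f
  · rw [Matrix.mul_assoc, ← Matrix.mul_assoc VL.1, mul_eq_one_comm.mp hVL.1.1, Matrix.one_mul,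
      hUD.1.1]
  · rw [snd_eq_of_mem_fiber hVL, ← hUD.2.2]
    simp only [Matrix.mul_assoc]

lemma eq_smul_one_of_mem_fiber_smul_one {c : ℝ}
    {UD : Matrix (Fin p) (Fin p) ℝ × Matrix (Fin p) (Fin p) ℝ} (h : UD ∈ fiber (c • 1)) :
    UD.2 = c • 1 := by
  rw [snd_eq_of_mem_fiber h, Matrix.mul_smul, Matrix.mul_one, Matrix.smul_mul, h.1.1]

lemma mk_smul_one_mem_fiber_smul_one {U : Matrix (Fin p) (Fin p) ℝ} (hU : IsSO U) {c : ℝ}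
    (hc : 0 < c) : (U, c • 1) ∈ fiber (c • (1 : Matrix (Fin p) (Fin p) ℝ)) := by
  refine ⟨hU, ⟨isDiag_one.smul c, fun i => by simpa using hc⟩, ?_⟩
  rw [Matrix.mul_smul, Matrix.mul_one, Matrix.smul_mul, mul_eq_one_comm.mp hU.1]

lemma frob_logDiag_smul_one_sub (c : ℝ) (L : Matrix (Fin p) (Fin p) ℝ) :
    frob (logDiag (c • 1) - logDiag L) = √(∑ i, (Real.log c - Real.log (L i i)) ^ 2) := by
  simp [frob_logDiag_sub]

lemma dSR_smul_one {k : ℝ} (hk : 0 ≤ k) {c : ℝ} (hc : 0 < c) {Y V Λ : Matrix (Fin p) (Fin p) ℝ}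
    (hVL : (V, Λ) ∈ fiber Y) :
    dSR k (c • 1) Y = frob (logDiag (c • 1) - logDiag Λ) := by
  refine IsLeast.csInf_eq ⟨⟨(V, c • 1), mk_smul_one_mem_fiber_smul_one hVL.1 hc, (V, Λ), hVL,
    (dM_mk_self_fst k hVL.1.isUnit_det _ _).symm⟩, ?_⟩
  rintro r ⟨UD, hUD, VL, hVL', rfl⟩
  calc frob (logDiag (c • 1) - logDiag Λ) = frob (logDiag UD.2 - logDiag VL.2) := by
        rw [eq_smul_one_of_mem_fiber_smul_one hUD, frob_logDiag_smul_one_sub,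
          frob_logDiag_smul_one_sub,
          sum_comp_diag_eq_of_mem_fiber hVL hVL' fun x => (Real.log c - Real.log x) ^ 2]
    _ ≤ dM k UD VL := frob_logDiag_sub_le_dM hk UD VL

end

theorem stmt7 (k : ℝ) (hk : 0 < k) (c : ℝ) (hc : 0 < c)
    (Y V Λ : Matrix (Fin 3) (Fin 3) ℝ) (hVL : (V, Λ) ∈ fiber Y) :
    dSR k (c • (1 : Matrix (Fin 3) (Fin 3) ℝ)) Y =
      frob (logDiag (c • (1 : Matrix (Fin 3) (Fin 3) ℝ)) - logDiag Λ) ∧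
    dSR k (c • (1 : Matrix (Fin 3) (Fin 3) ℝ)) Y ^ 2 =
      ∑ i, (Real.log c - Real.log (Λ i i)) ^ 2 := by
  have hdSR := dSR_smul_one hk.le hc hVL
  refine ⟨hdSR, ?_⟩
  rw [hdSR, frob_logDiag_smul_one_sub, Real.sq_sqrt (by positivity)]
end

section
/- Let q, m be positive integers and let R be a (q+m)×(q+m) real symmetric matrix with R·R = I, written in block form R = fromBlocks R₁ R₂ R₂ᵀ R₄, where R₁ is a symmetric q×q block, R₄ is a symmetric m×m block, and R₂ is q×m. Then: (a) every real eigenvalue of R₁ and every real eigenvalue of R₄ lies in the interval [−1, 1]; and (b) for every λ ∈ (−1, 1), dim ker(R₁ − λ·I_q) = dim ker(R₄ + λ·I_m), i.e., λ is an eigenvalue of R₁ if and only if −λ is an eigenvalue of R₄, with equal multiplicities. -/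
/-! From `R * R = 1` read off the blocks `R₁ * R₁ + R₂ * R₂ᵀ = 1` and
`R₂ᵀ * R₁ + R₄ * R₂ᵀ = 0`. For a `λ`-eigenvector `x` of `R₁` the first gives
`(1 - λ ^ 2) ‖x‖² = ‖R₂ᵀ x‖² ≥ 0`, so `|λ| ≤ 1`. The second says that `R₂ᵀ` maps
the `λ`-eigenspace of `R₁` into the `(-λ)`-eigenspace of `R₄`; it is injective there
when `λ ^ 2 ≠ 1`, because on `ker R₂ᵀ` the first identity makes `R₁ * R₁`, i.e. `λ ^ 2`,
act as `1`. Exchanging the roles of the two diagonal blocks gives the reverse inequality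
of dimensions. -/

open Matrix

namespace Matrix

variable {ι κ K : Type*} [Fintype ι] [Fintype κ]

theorem mulVec_mulVec_self_of_mulVec_eq_smul [CommRing K] {A : Matrix ι ι K} {μ : K}
    {x : ι → K}
    (hx : A *ᵥ x = μ • x) : (A * A) *ᵥ x = μ ^ 2 • x := by
  rw [← mulVec_mulVec, hx, mulVec_smul, hx, smul_smul, sq]

variable [DecidableEq ι]

theorem mem_ker_toLin'_sub_smul_one_iff [CommRing K] (A : Matrix ι ι K) (μ : K) (x : ι → K) :
    x ∈ LinearMap.ker (toLin' (A - μ • 1)) ↔ A *ᵥ x = μ • x := by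
  rw [LinearMap.mem_ker, toLin'_apply, sub_mulVec, smul_mulVec, one_mulVec, sub_eq_zero]

theorem abs_le_one_of_ker_ne_bot [Field K] [LinearOrder K] [IsStrictOrderedRing K]
    {A : Matrix ι ι K} {B : Matrix ι κ K} (hAB : A * A + B * Bᵀ = 1) {μ : K}
    (hμ : LinearMap.ker (toLin' (A - μ • 1)) ≠ ⊥) : |μ| ≤ 1 := by
  obtain ⟨x, hx, hx0⟩ := Submodule.exists_mem_ne_zero_of_ne_bot hμ
  rw [mem_ker_toLin'_sub_smul_one_iff] at hx
  have hsplit : μ ^ 2 • x + B *ᵥ (Bᵀ *ᵥ x) = x := by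
    rw [← mulVec_mulVec_self_of_mulVec_eq_smul hx, mulVec_mulVec, ← add_mulVec, hAB,
      one_mulVec]
  have hdot : μ ^ 2 * (x ⬝ᵥ x) + (Bᵀ *ᵥ x) ⬝ᵥ (Bᵀ *ᵥ x) = x ⬝ᵥ x := by
    have := congrArg (x ⬝ᵥ ·) hsplit
    rwa [dotProduct_add, dotProduct_smul, dotProduct_mulVec, ← mulVec_transpose,
      smul_eq_mul] at this
  have hxx : 0 < x ⬝ᵥ x :=
    lt_of_le_of_ne (Finset.sum_nonneg fun i _ => mul_self_nonneg (x i))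
      (Ne.symm (dotProduct_self_eq_zero.not.mpr hx0))
  have hBx : 0 ≤ (Bᵀ *ᵥ x) ⬝ᵥ (Bᵀ *ᵥ x) := Finset.sum_nonneg fun i _ => mul_self_nonneg _
  rw [← sq_le_one_iff_abs_le_one]
  nlinarith

theorem finrank_ker_sub_smul_le_finrank_ker_add_smul [DecidableEq κ] [Field K]
    {A : Matrix ι ι K} {B : Matrix ι κ K} {C : Matrix κ ι K} {D : Matrix κ κ K}
    (hA : A * A + B * C = 1) (hC : C * A + D * C = 0) {μ : K} (hμ : μ ^ 2 ≠ 1) :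
    Module.finrank K (LinearMap.ker (toLin' (A - μ • 1))) ≤
      Module.finrank K (LinearMap.ker (toLin' (D + μ • 1))) := by
  have hmaps : ∀ x ∈ LinearMap.ker (toLin' (A - μ • 1)),
      toLin' C x ∈ LinearMap.ker (toLin' (D + μ • 1)) := by
    intro x hx
    rw [mem_ker_toLin'_sub_smul_one_iff] at hx
    have := congrArg (· *ᵥ x) hC
    simp only [add_mulVec, ← mulVec_mulVec, hx, mulVec_smul, zero_mulVec] at this
    rw [LinearMap.mem_ker, toLin'_apply, toLin'_apply, add_mulVec, smul_mulVec, one_mulVec,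
      ← this, add_comm]
  refine LinearMap.finrank_le_finrank_of_injective (f := (toLin' C).restrict hmaps) ?_
  rw [← LinearMap.ker_eq_bot, LinearMap.ker_eq_bot']
  rintro ⟨x, hx⟩ hCx
  have hCx : C *ᵥ x = 0 := congrArg Subtype.val hCx
  rw [mem_ker_toLin'_sub_smul_one_iff] at hx
  have hx' : μ ^ 2 • x = x := by
    have := congrArg (· *ᵥ x) hA
    rwa [add_mulVec, mulVec_mulVec_self_of_mulVec_eq_smul hx, ← mulVec_mulVec, hCx, mulVec_zero,
      add_zero, one_mulVec] at this
  have : (μ ^ 2 - 1) • x = 0 := by rw [sub_smul, hx', one_smul, sub_self]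
  exact Subtype.ext ((smul_eq_zero.mp this).resolve_left (sub_ne_zero.mpr hμ))

end Matrix

theorem stmt9_general (q m : ℕ)
    (R₁ : Matrix (Fin q) (Fin q) ℝ) (R₂ : Matrix (Fin q) (Fin m) ℝ)
    (R₄ : Matrix (Fin m) (Fin m) ℝ)
    (hinv : Matrix.fromBlocks R₁ R₂ R₂ᵀ R₄ * Matrix.fromBlocks R₁ R₂ R₂ᵀ R₄ = 1) :
    (∀ lam : ℝ,
        LinearMap.ker (Matrix.toLin' (R₁ - lam • 1)) ≠ ⊥ → -1 ≤ lam ∧ lam ≤ 1) ∧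
    (∀ lam : ℝ,
        LinearMap.ker (Matrix.toLin' (R₄ - lam • 1)) ≠ ⊥ → -1 ≤ lam ∧ lam ≤ 1) ∧
    ∀ lam : ℝ, -1 < lam → lam < 1 →
      Module.finrank ℝ (LinearMap.ker (Matrix.toLin' (R₁ - lam • 1))) =
        Module.finrank ℝ (LinearMap.ker (Matrix.toLin' (R₄ + lam • 1))) := by
  rw [fromBlocks_multiply, ← fromBlocks_one, fromBlocks_inj] at hinv
  obtain ⟨h₁₁, h₁₂, h₂₁, h₂₂⟩ := hinv
  have h₂₂' : R₄ * R₄ + R₂ᵀ * R₂ᵀᵀ = 1 := by rw [transpose_transpose, add_comm, h₂₂]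
  refine ⟨fun μ hμ => abs_le.mp (abs_le_one_of_ker_ne_bot h₁₁ hμ),
    fun μ hμ => abs_le.mp (abs_le_one_of_ker_ne_bot h₂₂' hμ), fun μ hlo hhi => ?_⟩
  have hμ : μ ^ 2 ≠ 1 := ((sq_lt_one_iff_abs_lt_one μ).mpr (abs_lt.mpr ⟨hlo, hhi⟩)).ne
  have hle := finrank_ker_sub_smul_le_finrank_ker_add_smul h₁₁ h₂₁ hμ
  have hge := finrank_ker_sub_smul_le_finrank_ker_add_smul (A := R₄) (D := R₁) (μ := -μ)
    (by rwa [add_comm] at h₂₂) (by rwa [add_comm] at h₁₂) (by rwa [neg_sq])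
  rw [neg_smul, sub_neg_eq_add, neg_smul, ← sub_eq_add_neg] at hge
  exact hle.antisymm hge

theorem stmt9 (q m : ℕ) (hq : 0 < q) (hm : 0 < m)
    (R₁ : Matrix (Fin q) (Fin q) ℝ) (R₂ : Matrix (Fin q) (Fin m) ℝ)
    (R₄ : Matrix (Fin m) (Fin m) ℝ) (h1 : R₁.IsSymm) (h4 : R₄.IsSymm)
    (hinv : Matrix.fromBlocks R₁ R₂ R₂ᵀ R₄ * Matrix.fromBlocks R₁ R₂ R₂ᵀ R₄ = 1) :
    (∀ lam : ℝ,
        LinearMap.ker (Matrix.toLin' (R₁ - lam • 1)) ≠ ⊥ → -1 ≤ lam ∧ lam ≤ 1) ∧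
    (∀ lam : ℝ,
        LinearMap.ker (Matrix.toLin' (R₄ - lam • 1)) ≠ ⊥ → -1 ≤ lam ∧ lam ≤ 1) ∧
    ∀ lam : ℝ, -1 < lam → lam < 1 →
      Module.finrank ℝ (LinearMap.ker (Matrix.toLin' (R₁ - lam • 1))) =
        Module.finrank ℝ (LinearMap.ker (Matrix.toLin' (R₄ + lam • 1))) :=
  stmt9_general q m R₁ R₂ R₄ hinv
end
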